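/- arXiv:1205.6316 — 6 statements merged into one kernel-verified Lean document; each statement's English description precedes it below -/
import Mathlib

section
/- For b ∈ (0, π/2), with the substitution sin φ = x sin b, the integral I₂(b) = ∫_{−b}^{b} cos³φ / √(cos⁴φ − cos⁴b) dφ equals ∫_{−1}^{1} (1 − x² sin²b) / (√(1−x²) · √(1 + cos²b − x² sin²b)) dx. -/
open Real Set intervalIntegral

/-!
Put `x = sin φ / sin b`. On `(-b, b)` this map is increasing onto `(-1, 1)` with derivative
`cos φ / sin b ≥ 0`, and `cos⁴φ - cos⁴b = (sin²b - sin²φ)(cos²φ + cos²b)` turns the pulled-back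
integrand into the original one. No integrability has to be checked: for a monotone
substitution both sides are integrable or not together, so the formula holds unconditionally.
-/

theorem Real.sin_sq_lt_sin_sq_of_abs_lt {φ b : ℝ} (hφb : |φ| < b) (hb : b ≤ π / 2) :
    sin φ ^ 2 < sin b ^ 2 := by
  obtain ⟨hlo, hhi⟩ := abs_lt.1 hφb
  refine sq_lt_sq' ?_ (sin_lt_sin_of_lt_of_le_pi_div_two (by linarith) hb hhi)
  rw [← sin_neg]
  exact sin_lt_sin_of_lt_of_le_pi_div_two (by linarith) (by linarith) hlo

theorem Real.cos_pow_four_sub_cos_pow_four (φ b : ℝ) :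
    cos φ ^ 4 - cos b ^ 4 = (sin b ^ 2 - sin φ ^ 2) * (cos φ ^ 2 + cos b ^ 2) := by
  nlinarith [sin_sq_add_cos_sq φ, sin_sq_add_cos_sq b]

theorem Real.cos_pow_three_div_sqrt_eq_of_sin_sq_lt {φ b : ℝ} (hb : 0 < sin b)
    (hφ : 0 < cos φ) (hφb : sin φ ^ 2 < sin b ^ 2) :
    cos φ ^ 3 / √(cos φ ^ 4 - cos b ^ 4) =
      cos φ / sin b * ((1 - (sin φ / sin b) ^ 2 * sin b ^ 2) /
        (√(1 - (sin φ / sin b) ^ 2) * √(1 + cos b ^ 2 - (sin φ / sin b) ^ 2 * sin b ^ 2))) := by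
  have hA : 0 < sin b ^ 2 - sin φ ^ 2 := sub_pos.2 hφb
  have hB : 0 < cos φ ^ 2 + cos b ^ 2 := by positivity
  have hx : (sin φ / sin b) ^ 2 * sin b ^ 2 = sin φ ^ 2 := by field_simp
  have h1x : 1 - (sin φ / sin b) ^ 2 = (sin b ^ 2 - sin φ ^ 2) / sin b ^ 2 := by field_simp
  have hcos_sq : 1 - sin φ ^ 2 = cos φ ^ 2 := by linarith [sin_sq_add_cos_sq φ]
  have hinner : 1 + cos b ^ 2 - sin φ ^ 2 = cos φ ^ 2 + cos b ^ 2 := by linarith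
  rw [hx, h1x, hinner, hcos_sq, cos_pow_four_sub_cos_pow_four, sqrt_mul hA.le, sqrt_div hA.le,
    sqrt_sq hb.le]
  field_simp

/-- For `b ∈ (0, π/2)`, the substitution `sin φ = x sin b` transforms
`I₂(b) = ∫_{−b}^{b} cos³φ / √(cos⁴φ − cos⁴b) dφ` into
`∫_{−1}^{1} (1 − x² sin²b) / (√(1−x²) √(1 + cos²b − x² sin²b)) dx`. -/
theorem I2_substitution (b : ℝ) (hb : b ∈ Ioo 0 (π / 2)) :
    (∫ φ in (-b)..b, Real.cos φ ^ 3 / Real.sqrt (Real.cos φ ^ 4 - Real.cos b ^ 4)) =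
    ∫ x in (-1 : ℝ)..1, (1 - x ^ 2 * Real.sin b ^ 2) /
      (Real.sqrt (1 - x ^ 2) *
        Real.sqrt (1 + Real.cos b ^ 2 - x ^ 2 * Real.sin b ^ 2)) := by
  obtain ⟨hb0, hb2⟩ := hb
  have hsb : 0 < sin b := sin_pos_of_pos_of_lt_pi hb0 (by linarith [pi_pos])
  have hIoo : Ioo (min (-b) b) (max (-b) b) = Ioo (-b) b := by
    rw [min_eq_left (by linarith), max_eq_right (by linarith)]
  have hcos : ∀ φ ∈ Ioo (-b) b, 0 < cos φ := fun φ hφ =>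
    cos_pos_of_mem_Ioo ⟨by linarith [hφ.1], by linarith [hφ.2]⟩
  have hsubst := integral_deriv_smul_comp_of_deriv_nonneg (f := fun φ => sin φ / sin b)
    (f' := fun φ => cos φ / sin b) (continuous_sin.div_const _).continuousOn
    (fun φ _ => (hasDerivAt_sin φ).div_const _)
    (fun φ hφ => (div_pos (hcos φ (hIoo ▸ hφ)) hsb).le)
    (g := fun x => (1 - x ^ 2 * sin b ^ 2) /
      (√(1 - x ^ 2) * √(1 + cos b ^ 2 - x ^ 2 * sin b ^ 2)))
  simp only [sin_neg, neg_div, div_self hsb.ne', Function.comp_apply, smul_eq_mul] at hsubst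
  rw [← hsubst]
  refine integral_congr_Ioo_of_le (by linarith) fun φ hφ => ?_
  exact cos_pow_three_div_sqrt_eq_of_sin_sq_lt hsb (hcos φ hφ)
    (sin_sq_lt_sin_sq_of_abs_lt (abs_lt.2 hφ) hb2.le)
end

section
/- For b ∈ (0, π/2) and k² = sin²b/(1 + cos²b), the identity I₂(b) = 2·√(2/(1+k²))·(E(k) − ((1−k²)/2)·K(k)) holds, where I₂(b) = ∫_{−1}^{1} (1 − x² sin²b) / (√(1−x²)·√(1 + cos²b − x² sin²b)) dx. -/
open Real Set intervalIntegral

/-- Complete elliptic integral of the first kind. -/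
noncomputable def ellK (k : ℝ) : ℝ :=
  ∫ x in (0 : ℝ)..1, 1 / (Real.sqrt (1 - x ^ 2) * Real.sqrt (1 - k ^ 2 * x ^ 2))

/-- Complete elliptic integral of the second kind. -/
noncomputable def ellE (k : ℝ) : ℝ :=
  ∫ x in (0 : ℝ)..1, Real.sqrt (1 - k ^ 2 * x ^ 2) / Real.sqrt (1 - x ^ 2)

/-!
Write `A = 1 + cos² b`. Then `sin² b = A k²` and `A (1 + k²) = 2`, and splitting the numerator
as `1 - A k² x² = A (1 - k² x²) + (1 - A)` shows that the integrand of `I₂` is `√A` times the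
integrand of `E(k)` plus `(1 - A) / √A = -√A (1 - k²) / 2` times that of `K(k)`. Both
integrands are even, so `∫_{-1}^1` is twice `∫_0^1`.
-/

open MeasureTheory (volume)

theorem integral_neg_self_eq_two_smul_of_even {E : Type*} [NormedAddCommGroup E]
    [NormedSpace ℝ E] {f : ℝ → E} {a : ℝ} (hf : ∀ x, f (-x) = f x)
    (hi : IntervalIntegrable f volume 0 a) :
    ∫ x in -a..a, f x = (2 : ℝ) • ∫ x in (0 : ℝ)..a, f x := by
  have hi' : IntervalIntegrable f volume (-a) 0 := by
    simpa [hf] using (IntervalIntegrable.iff_comp_neg (f := f)).mp hi |>.symm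
  have hleft : ∫ x in -a..0, f x = ∫ x in (0 : ℝ)..a, f x := by
    simpa [hf] using (integral_comp_neg (a := 0) (b := a) f).symm
  rw [← integral_add_adjacent_intervals hi' hi, hleft, two_smul]

theorem intervalIntegrable_one_div_sqrt_one_sub_sq :
    IntervalIntegrable (fun x : ℝ => 1 / √(1 - x ^ 2)) volume 0 1 := by
  refine intervalIntegrable_deriv_of_nonneg continuous_arcsin.continuousOn
    (fun x hx => hasDerivAt_arcsin ?_ ?_) (fun x _ => by positivity)
  · norm_num at hx; linarith [hx.1]
  · norm_num at hx; linarith [hx.2]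

noncomputable def ellKIntegrand (k x : ℝ) : ℝ := 1 / (√(1 - x ^ 2) * √(1 - k ^ 2 * x ^ 2))

noncomputable def ellEIntegrand (k x : ℝ) : ℝ := √(1 - k ^ 2 * x ^ 2) / √(1 - x ^ 2)

theorem ellEIntegrand_neg (k x : ℝ) : ellEIntegrand k (-x) = ellEIntegrand k x := by
  simp only [ellEIntegrand, neg_sq]

theorem ellKIntegrand_neg (k x : ℝ) : ellKIntegrand k (-x) = ellKIntegrand k x := by
  simp only [ellKIntegrand, neg_sq]

theorem ellEIntegrand_le (k x : ℝ) : ellEIntegrand k x ≤ 1 / √(1 - x ^ 2) := by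
  rw [ellEIntegrand, div_eq_mul_one_div]
  exact mul_le_of_le_one_left (by positivity) (sqrt_le_one.mpr (by nlinarith [sq_nonneg (k * x)]))

-- For `1 ≤ x²` both sides vanish, since `√` of a nonpositive number is `0`.
theorem ellKIntegrand_le {k : ℝ} (hk : k ^ 2 < 1) (x : ℝ) :
    ellKIntegrand k x ≤ (√(1 - k ^ 2))⁻¹ * (1 / √(1 - x ^ 2)) := by
  rcases (sqrt_nonneg (1 - x ^ 2)).eq_or_lt with hd | hd
  · simp [ellKIntegrand, ← hd]
  have hx : x ^ 2 < 1 := by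
    by_contra! h
    simp [sqrt_eq_zero'.mpr (by linarith : 1 - x ^ 2 ≤ 0)] at hd
  have hks : √(1 - k ^ 2) ≤ √(1 - k ^ 2 * x ^ 2) := sqrt_le_sqrt (by nlinarith)
  have hk0 : 0 < √(1 - k ^ 2) := sqrt_pos.mpr (by linarith)
  rw [ellKIntegrand, ← one_div, one_div_mul_one_div, mul_comm (√(1 - k ^ 2))]
  gcongr

theorem intervalIntegrable_ellEIntegrand (k : ℝ) :
    IntervalIntegrable (ellEIntegrand k) volume 0 1 :=
  intervalIntegrable_one_div_sqrt_one_sub_sq.mono_fun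
    (by unfold ellEIntegrand; exact (by fun_prop : Measurable _).aestronglyMeasurable)
    (Filter.Eventually.of_forall fun x => by
      show ‖ellEIntegrand k x‖ ≤ ‖1 / √(1 - x ^ 2)‖
      rw [norm_of_nonneg (by unfold ellEIntegrand; positivity), norm_of_nonneg (by positivity)]
      exact ellEIntegrand_le k x)

theorem intervalIntegrable_ellKIntegrand {k : ℝ} (hk : k ^ 2 < 1) :
    IntervalIntegrable (ellKIntegrand k) volume 0 1 :=
  (intervalIntegrable_one_div_sqrt_one_sub_sq.const_mul _).mono_fun
    (by unfold ellKIntegrand; exact (by fun_prop : Measurable _).aestronglyMeasurable)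
    (Filter.Eventually.of_forall fun x => by
      show ‖ellKIntegrand k x‖ ≤ ‖(√(1 - k ^ 2))⁻¹ * (1 / √(1 - x ^ 2))‖
      rw [norm_of_nonneg (by unfold ellKIntegrand; positivity), norm_of_nonneg (by positivity)]
      exact ellKIntegrand_le hk x)

theorem div_sqrt_mul_sqrt_eq_ellEIntegrand_add_ellKIntegrand {A : ℝ} (hA : 0 ≤ A) (k x : ℝ) :
    (1 - x ^ 2 * (A * k ^ 2)) / (√(1 - x ^ 2) * √(A - x ^ 2 * (A * k ^ 2))) =
      √A * ellEIntegrand k x + (1 - A) / √A * ellKIntegrand k x := by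
  rw [show A - x ^ 2 * (A * k ^ 2) = A * (1 - k ^ 2 * x ^ 2) by ring, sqrt_mul hA,
    ellEIntegrand, ellKIntegrand]
  rcases (sqrt_nonneg (1 - x ^ 2)).eq_or_lt with hd | hd
  · simp [← hd]
  rcases (sqrt_nonneg A).eq_or_lt with ha | ha
  · simp [← ha]
  rcases (sqrt_nonneg (1 - k ^ 2 * x ^ 2)).eq_or_lt with hu | hu
  · simp [← hu]
  have hA2 := sq_sqrt hA
  have hu2 := sq_sqrt (sqrt_pos.mp hu).le
  generalize √(1 - x ^ 2) = d at *
  generalize √A = a at *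
  generalize √(1 - k ^ 2 * x ^ 2) = u at *
  field_simp
  linear_combination (-u ^ 2) * hA2 - A * hu2

theorem I2_elliptic_general (b k : ℝ) (hk : k ∈ Ioo (0 : ℝ) 1)
    (hk2 : k ^ 2 = Real.sin b ^ 2 / (1 + Real.cos b ^ 2)) :
    (∫ x in (-1 : ℝ)..1, (1 - x ^ 2 * Real.sin b ^ 2) /
        (Real.sqrt (1 - x ^ 2) *
          Real.sqrt (1 + Real.cos b ^ 2 - x ^ 2 * Real.sin b ^ 2))) =
    2 * Real.sqrt (2 / (1 + k ^ 2)) * (ellE k - (1 - k ^ 2) / 2 * ellK k) := by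
  set A := 1 + cos b ^ 2 with hAdef
  have hA : 0 < A := by positivity
  have hsin : sin b ^ 2 = A * k ^ 2 := by rw [hk2]; field_simp
  have hAk : A * (1 + k ^ 2) = 2 := by linear_combination sin_sq_add_cos_sq b - hsin + hAdef
  have hA_eq : 2 / (1 + k ^ 2) = A := by rw [← hAk, mul_div_cancel_right₀ _ (by positivity)]
  have hcoef : (1 - A) / √A = -(√A * ((1 - k ^ 2) / 2)) := by
    rw [div_eq_iff (sqrt_pos.mpr hA).ne']
    linear_combination (1 - k ^ 2) / 2 * sq_sqrt hA.le - hAk / 2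
  have hk1 : k ^ 2 < 1 := pow_lt_one₀ hk.1.le hk.2 two_ne_zero
  have hE := (intervalIntegrable_ellEIntegrand k).const_mul √A
  have hK := (intervalIntegrable_ellKIntegrand hk1).const_mul ((1 - A) / √A)
  calc _ = ∫ x in (-1 : ℝ)..1,
          √A * ellEIntegrand k x + (1 - A) / √A * ellKIntegrand k x := by
        simp_rw [hsin, div_sqrt_mul_sqrt_eq_ellEIntegrand_add_ellKIntegrand hA.le]
    _ = 2 * (√A * ellE k + (1 - A) / √A * ellK k) := by
        rw [integral_neg_self_eq_two_smul_of_even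
            (fun x => by rw [ellEIntegrand_neg, ellKIntegrand_neg]) (hE.add hK),
          smul_eq_mul, integral_add hE hK, integral_const_mul, integral_const_mul]
        rfl
    _ = _ := by rw [hcoef, hA_eq]; ring

/-- For `b ∈ (0, π/2)` and `k ∈ (0,1)` with `k² = sin²b/(1 + cos²b)`,
`I₂(b) = 2 √(2/(1+k²)) (E(k) − ((1−k²)/2) K(k))`. -/
theorem I2_elliptic (b k : ℝ) (hb : b ∈ Ioo 0 (π / 2)) (hk : k ∈ Ioo (0 : ℝ) 1)
    (hk2 : k ^ 2 = Real.sin b ^ 2 / (1 + Real.cos b ^ 2)) :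
    (∫ x in (-1 : ℝ)..1, (1 - x ^ 2 * Real.sin b ^ 2) /
        (Real.sqrt (1 - x ^ 2) *
          Real.sqrt (1 + Real.cos b ^ 2 - x ^ 2 * Real.sin b ^ 2))) =
    2 * Real.sqrt (2 / (1 + k ^ 2)) * (ellE k - (1 - k ^ 2) / 2 * ellK k) :=
  I2_elliptic_general b k hk hk2
end

section
/- For b ∈ (0, π/2) and k² = sin²b/(1 + cos²b), the identity I₁(b) = (4/3)·√(2/(1+k²))·(E(k) − ((1−k²)(1+3k²)/(4(1+k²)))·K(k)) holds, where I₁(b) = ∫_{−1}^{1} (1 − x² sin²b)² / (√(1−x²)·√(1 + cos²b − x² sin²b)) dx. -/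
open Real Set intervalIntegral MeasureTheory

/-!
The relation between `k` and `b` gives `cos² b = (1 - k²)/(1 + k²)` and `sin² b = 2k²/(1 + k²)`,
which turns the integrand of `I₁(b)` into an even function, a constant multiple of
`(1 + k² - 2k²x²)² / (√(1 - x²) √(1 - k²x²))`. Writing the square as a combination of
`1 - k²x²`, `1` and `1 - 2(1 + k²)x² + 3k²x⁴` against this weight gives `E(k)`, `K(k)` and a
term that vanishes: the quartic over the weight is the derivative of `x √(1 - x²) √(1 - k²x²)`,
which is zero at both ends of `[0, 1]`.
-/

theorem intervalIntegral.integral_eq_two_mul_of_even {f : ℝ → ℝ} (hf : ∀ x, f (-x) = f x)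
    {a : ℝ} (hint : IntervalIntegrable f volume (-a) a) :
    ∫ x in -a..a, f x = 2 * ∫ x in 0..a, f x := by
  have h0 : (0 : ℝ) ∈ uIcc (-a) a := by
    rcases le_total 0 a with h | h
    · exact mem_uIcc.2 (Or.inl ⟨by linarith, h⟩)
    · exact mem_uIcc.2 (Or.inr ⟨h, by linarith⟩)
  have hleft : ∫ x in -a..0, f x = ∫ x in 0..a, f x := by
    simpa [hf] using (integral_comp_neg (a := 0) (b := a) f).symm
  rw [← integral_add_adjacent_intervals (b := 0)
    (hint.mono_set (uIcc_subset_uIcc left_mem_uIcc h0))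
    (hint.mono_set (uIcc_subset_uIcc h0 right_mem_uIcc)), hleft, two_mul]

noncomputable def ellipticWeight (k x : ℝ) : ℝ :=
  1 / (√(1 - x ^ 2) * √(1 - k ^ 2 * x ^ 2))

theorem ellK_eq_integral_ellipticWeight (k : ℝ) :
    ellK k = ∫ x in (0 : ℝ)..1, ellipticWeight k x :=
  rfl

theorem ellE_eq_integral_mul_ellipticWeight (k : ℝ) :
    ellE k = ∫ x in (0 : ℝ)..1, (1 - k ^ 2 * x ^ 2) * ellipticWeight k x := by
  refine integral_congr fun x _ => ?_
  rw [ellipticWeight, ← div_eq_mul_one_div, mul_comm (√(1 - x ^ 2)), ← div_div, Real.div_sqrt]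

theorem intervalIntegrable_mul_ellipticWeight {k a b : ℝ} (hk : k ^ 2 < 1)
    (hab : uIcc a b ⊆ Icc (-1) 1) {P : ℝ → ℝ} (hP : ContinuousOn P (uIcc a b)) :
    IntervalIntegrable (fun x => P x * ellipticWeight k x) volume a b := by
  have hpos : ∀ x ∈ uIcc a b, 0 < 1 - k ^ 2 * x ^ 2 := fun x hx => by
    have : x ^ 2 ≤ 1 := by nlinarith [(hab hx).1, (hab hx).2]
    nlinarith [sq_nonneg k]
  have hcont : ContinuousOn (fun x => P x * (√(1 - k ^ 2 * x ^ 2))⁻¹) (uIcc a b) :=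
    hP.mul (ContinuousOn.inv₀ (by fun_prop) fun x hx => (Real.sqrt_pos.2 (hpos x hx)).ne')
  have hsub : uIcc a b ⊆ uIcc (-1) 1 := by rwa [uIcc_of_le (a := (-1 : ℝ)) (by norm_num)]
  refine ((Polynomial.Chebyshev.intervalIntegrable_sqrt_one_sub_sq_inv.mono_set
    hsub).continuousOn_mul hcont).congr fun x _ => ?_
  simp only [ellipticWeight, Real.sqrt_inv]
  ring

theorem hasDerivAt_mul_sqrt_mul_sqrt {k x : ℝ} (hk : k ^ 2 ≤ 1) (hx : x ∈ Ioo (-1) 1) :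
    HasDerivAt (fun x => x * √(1 - x ^ 2) * √(1 - k ^ 2 * x ^ 2))
      ((1 - 2 * (1 + k ^ 2) * x ^ 2 + 3 * k ^ 2 * x ^ 4) * ellipticWeight k x) x := by
  have h₁ : 0 < 1 - x ^ 2 := by nlinarith [hx.1, hx.2]
  have h₂ : 0 < 1 - k ^ 2 * x ^ 2 := by nlinarith [sq_nonneg k]
  have hd₁ : HasDerivAt (fun x : ℝ => 1 - x ^ 2) (-(2 * x)) x := by
    simpa using (hasDerivAt_pow 2 x).const_sub 1
  have hd₂ : HasDerivAt (fun x : ℝ => 1 - k ^ 2 * x ^ 2) (-(k ^ 2 * (2 * x))) x := by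
    simpa using ((hasDerivAt_pow 2 x).const_mul (k ^ 2)).const_sub 1
  refine (((hasDerivAt_id' x).mul (hd₁.sqrt h₁.ne')).mul (hd₂.sqrt h₂.ne')).congr_deriv ?_
  have hs₁ := Real.sq_sqrt h₁.le
  have hs₂ := Real.sq_sqrt h₂.le
  have hs₁₀ := Real.sqrt_pos.2 h₁
  have hs₂₀ := Real.sqrt_pos.2 h₂
  simp only [ellipticWeight, Pi.mul_apply]
  generalize √(1 - x ^ 2) = a at *
  generalize √(1 - k ^ 2 * x ^ 2) = b at *
  field_simp
  linear_combination (b ^ 2 - k ^ 2 * x ^ 2) * hs₁ + (1 - 2 * x ^ 2) * hs₂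

theorem integral_quartic_mul_ellipticWeight_eq_zero {k : ℝ} (hk : k ^ 2 < 1) :
    ∫ x in (0 : ℝ)..1, (1 - 2 * (1 + k ^ 2) * x ^ 2 + 3 * k ^ 2 * x ^ 4) * ellipticWeight k x
      = 0 := by
  have hsub : uIcc (0 : ℝ) 1 ⊆ Icc (-1) 1 := by
    rw [uIcc_of_le zero_le_one]; exact Icc_subset_Icc (by norm_num) le_rfl
  rw [integral_eq_sub_of_hasDerivAt_of_le zero_le_one (by fun_prop)
    (fun x hx => hasDerivAt_mul_sqrt_mul_sqrt hk.le ⟨by linarith [hx.1], hx.2⟩)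
    (intervalIntegrable_mul_ellipticWeight hk hsub (by fun_prop))]
  simp

theorem integral_sq_mul_ellipticWeight {k : ℝ} (hk : k ^ 2 < 1) :
    ∫ x in (0 : ℝ)..1, (1 + k ^ 2 - 2 * k ^ 2 * x ^ 2) ^ 2 * ellipticWeight k x =
      4 / 3 * (1 + k ^ 2) * ellE k - (1 - k ^ 2) * (1 + 3 * k ^ 2) / 3 * ellK k := by
  have hsub : uIcc (0 : ℝ) 1 ⊆ Icc (-1) 1 := by
    rw [uIcc_of_le zero_le_one]; exact Icc_subset_Icc (by norm_num) le_rfl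
  have hint : ∀ P : ℝ → ℝ, Continuous P →
      IntervalIntegrable (fun x => P x * ellipticWeight k x) volume 0 1 :=
    fun P hP => intervalIntegrable_mul_ellipticWeight hk hsub hP.continuousOn
  have hsplit : ∀ x : ℝ, (1 + k ^ 2 - 2 * k ^ 2 * x ^ 2) ^ 2 * ellipticWeight k x =
      4 / 3 * (1 + k ^ 2) * ((1 - k ^ 2 * x ^ 2) * ellipticWeight k x)
        - (1 - k ^ 2) * (1 + 3 * k ^ 2) / 3 * ellipticWeight k x
        + 4 / 3 * k ^ 2 *
          ((1 - 2 * (1 + k ^ 2) * x ^ 2 + 3 * k ^ 2 * x ^ 4) * ellipticWeight k x) :=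
    fun x => by ring
  simp_rw [hsplit]
  rw [intervalIntegral.integral_add, intervalIntegral.integral_sub,
    intervalIntegral.integral_const_mul, intervalIntegral.integral_const_mul,
    intervalIntegral.integral_const_mul, integral_quartic_mul_ellipticWeight_eq_zero hk,
    ← ellE_eq_integral_mul_ellipticWeight, ← ellK_eq_integral_ellipticWeight, mul_zero, add_zero]
  all_goals first
    | exact (hint _ (by fun_prop)).const_mul _
    | exact hint _ (by fun_prop)
    | exact ((hint _ (by fun_prop)).const_mul _).sub (hint _ (by fun_prop))

theorem cos_sq_eq_of_sq_eq_sin_sq_div {b k : ℝ}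
    (h : k ^ 2 = Real.sin b ^ 2 / (1 + Real.cos b ^ 2)) :
    Real.cos b ^ 2 = (1 - k ^ 2) / (1 + k ^ 2) := by
  rw [eq_div_iff (by positivity : (1 : ℝ) + cos b ^ 2 ≠ 0)] at h
  rw [eq_div_iff (by positivity)]
  linear_combination h + sin_sq_add_cos_sq b

theorem sin_sq_eq_of_sq_eq_sin_sq_div {b k : ℝ}
    (h : k ^ 2 = Real.sin b ^ 2 / (1 + Real.cos b ^ 2)) :
    Real.sin b ^ 2 = 2 * k ^ 2 / (1 + k ^ 2) := by
  rw [sin_sq, cos_sq_eq_of_sq_eq_sin_sq_div h]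
  field_simp
  ring

theorem I1_elliptic_general (b k : ℝ) (hk : k ∈ Ioo (0 : ℝ) 1)
    (hk2 : k ^ 2 = Real.sin b ^ 2 / (1 + Real.cos b ^ 2)) :
    (∫ x in (-1 : ℝ)..1, (1 - x ^ 2 * Real.sin b ^ 2) ^ 2 /
        (Real.sqrt (1 - x ^ 2) *
          Real.sqrt (1 + Real.cos b ^ 2 - x ^ 2 * Real.sin b ^ 2))) =
    4 / 3 * Real.sqrt (2 / (1 + k ^ 2)) *
      (ellE k - (1 - k ^ 2) * (1 + 3 * k ^ 2) / (4 * (1 + k ^ 2)) * ellK k) := by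
  have hk1 : k ^ 2 < 1 := by nlinarith [hk.1, hk.2]
  set w := √(2 / (1 + k ^ 2))
  have hw₀ : 0 < w := Real.sqrt_pos.2 (by positivity)
  have hw : w ^ 2 * (1 + k ^ 2) = 2 := by
    rw [Real.sq_sqrt (by positivity)]
    field_simp
  have hintegrand : ∀ x : ℝ, (1 - x ^ 2 * sin b ^ 2) ^ 2 /
      (√(1 - x ^ 2) * √(1 + cos b ^ 2 - x ^ 2 * sin b ^ 2)) =
      w / (2 * (1 + k ^ 2)) * ((1 + k ^ 2 - 2 * k ^ 2 * x ^ 2) ^ 2 * ellipticWeight k x) := by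
    intro x
    have hdenom : 1 + cos b ^ 2 - x ^ 2 * sin b ^ 2 = 2 / (1 + k ^ 2) * (1 - k ^ 2 * x ^ 2) := by
      rw [cos_sq_eq_of_sq_eq_sin_sq_div hk2, sin_sq_eq_of_sq_eq_sin_sq_div hk2]
      field_simp
      ring
    rw [hdenom, Real.sqrt_mul (by positivity), mul_left_comm, ← div_div, ellipticWeight,
      div_eq_mul_one_div (_ / w), ← mul_assoc]
    congr 1
    rw [sin_sq_eq_of_sq_eq_sin_sq_div hk2]
    field_simp
    linear_combination -(1 + k ^ 2 - 2 * k ^ 2 * x ^ 2) ^ 2 * hw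
  have heven : ∀ x : ℝ, (1 + k ^ 2 - 2 * k ^ 2 * (-x) ^ 2) ^ 2 * ellipticWeight k (-x) =
      (1 + k ^ 2 - 2 * k ^ 2 * x ^ 2) ^ 2 * ellipticWeight k x := by
    simp [ellipticWeight]
  simp_rw [hintegrand]
  rw [intervalIntegral.integral_const_mul, integral_eq_two_mul_of_even heven
    (intervalIntegrable_mul_ellipticWeight hk1 (by rw [uIcc_of_le (by norm_num)])
      (by fun_prop)), integral_sq_mul_ellipticWeight hk1]
  field_simp

/-- For `b ∈ (0, π/2)` and `k ∈ (0,1)` with `k² = sin²b/(1 + cos²b)`,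
`I₁(b) = (4/3) √(2/(1+k²)) (E(k) − ((1−k²)(1+3k²)/(4(1+k²))) K(k))`. -/
theorem I1_elliptic (b k : ℝ) (hb : b ∈ Ioo 0 (π / 2)) (hk : k ∈ Ioo (0 : ℝ) 1)
    (hk2 : k ^ 2 = Real.sin b ^ 2 / (1 + Real.cos b ^ 2)) :
    (∫ x in (-1 : ℝ)..1, (1 - x ^ 2 * Real.sin b ^ 2) ^ 2 /
        (Real.sqrt (1 - x ^ 2) *
          Real.sqrt (1 + Real.cos b ^ 2 - x ^ 2 * Real.sin b ^ 2))) =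
    4 / 3 * Real.sqrt (2 / (1 + k ^ 2)) *
      (ellE k - (1 - k ^ 2) * (1 + 3 * k ^ 2) / (4 * (1 + k ^ 2)) * ellK k) :=
  I1_elliptic_general b k hk hk2
end

section
/- The function k ↦ I₁(k)/I₂(k)³ is strictly decreasing on (0,1), where I₁(k) = (4/3)·√(2/(1+k²))·(E(k) − ((1−k²)(1+3k²)/(4(1+k²)))·K(k)) and I₂(k) = 2·√(2/(1+k²))·(E(k) − ((1−k²)/2)·K(k)). -/
/-!
Write `E`, `K` for `ellE k`, `ellK k` and `D = E - (1 - k²) K / 2`, so that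
`I₁ / I₂³ = ((1 + k²) E - (1 - k²)(1 + 3k²) K / 4) / (12 D³)`.
Differentiating under the integral sign (the integrands are `g(k² t²) / √(1 - t²)` with `g`
smooth below `1`, and `1 / √(1 - t²)` is integrable) gives Legendre's formulas
`E' = (E - K) / k` and `K' = E / (k (1 - k²)) - K / k`; for `K'` one integrates by parts once.
With them the derivative of the ratio collapses to `(1 - k²) E ((1 - k²) K - E) / (16 k D⁴)`,
which is negative because `E - (1 - k²) K = k² ∫₀¹ √(1 - t²) / √(1 - k² t²) dt > 0`.
-/

open Real Set intervalIntegral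

noncomputable def I₁ (k : ℝ) : ℝ :=
  4 / 3 * Real.sqrt (2 / (1 + k ^ 2)) *
    (ellE k - (1 - k ^ 2) * (1 + 3 * k ^ 2) / (4 * (1 + k ^ 2)) * ellK k)

noncomputable def I₂ (k : ℝ) : ℝ :=
  2 * Real.sqrt (2 / (1 + k ^ 2)) * (ellE k - (1 - k ^ 2) / 2 * ellK k)

open MeasureTheory Filter Topology

theorem intervalIntegrable_div_sqrt_one_sub_sq {h : ℝ → ℝ} (hh : ContinuousOn h (Icc 0 1)) :
    IntervalIntegrable (fun t => h t / √(1 - t ^ 2)) volume 0 1 := by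
  have hw : IntervalIntegrable (fun t : ℝ => (√(1 - t ^ 2))⁻¹) volume 0 1 := by
    simpa only [Real.sqrt_inv] using
      Polynomial.Chebyshev.intervalIntegrable_sqrt_one_sub_sq_inv.mono_set
        (uIcc_subset_uIcc (by norm_num) (by norm_num))
  exact hw.continuousOn_mul (by rwa [uIcc_of_le zero_le_one])

theorem mapsTo_sq_mul_sq {x r : ℝ} (hx : |x| ≤ r) :
    MapsTo (fun t : ℝ => x ^ 2 * t ^ 2) (Icc 0 1) (Icc 0 (r ^ 2)) := fun t ht => by
  have hx2 : x ^ 2 ≤ r ^ 2 := by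
    simpa only [sq_abs] using pow_le_pow_left₀ (abs_nonneg x) hx 2
  exact ⟨by positivity,
    (mul_le_of_le_one_right (sq_nonneg x) (pow_le_one₀ ht.1 ht.2)).trans hx2⟩

theorem hasDerivAt_integral_comp_mul_sq_div_sqrt {g g' : ℝ → ℝ}
    (hg : ∀ u < 1, HasDerivAt g (g' u) u) (hg' : ContinuousOn g' (Iio 1)) {k : ℝ}
    (hk : |k| < 1) :
    HasDerivAt (fun x => ∫ t in (0 : ℝ)..1, g (x ^ 2 * t ^ 2) / √(1 - t ^ 2))
      (∫ t in (0 : ℝ)..1, 2 * k * t ^ 2 * g' (k ^ 2 * t ^ 2) / √(1 - t ^ 2)) k := by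
  obtain ⟨r, hkr, hr⟩ := exists_between hk
  have hs : {x : ℝ | |x| < r} ∈ 𝓝 k := (isOpen_lt continuous_abs continuous_const).mem_nhds hkr
  have hsub : Icc 0 (r ^ 2) ⊆ Iio 1 := fun u hu =>
    hu.2.trans_lt (pow_lt_one₀ ((abs_nonneg k).trans hkr.le) hr two_ne_zero)
  have hg_cont : ContinuousOn g (Iio 1) := fun u hu =>
    (hg u hu).continuousAt.continuousWithinAt
  obtain ⟨C, hC⟩ := isCompact_Icc.exists_bound_of_continuousOn (hg'.mono hsub)
  have hF_int : ∀ x : ℝ, |x| < r →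
      IntervalIntegrable (fun t => g (x ^ 2 * t ^ 2) / √(1 - t ^ 2)) volume 0 1 := fun x hx =>
    intervalIntegrable_div_sqrt_one_sub_sq
      ((hg_cont.mono hsub).comp (by fun_prop) (mapsTo_sq_mul_sq hx.le))
  have hF'_int : IntervalIntegrable
      (fun t => 2 * k * t ^ 2 * g' (k ^ 2 * t ^ 2) / √(1 - t ^ 2)) volume 0 1 :=
    intervalIntegrable_div_sqrt_one_sub_sq <| ContinuousOn.mul (by fun_prop)
      ((hg'.mono hsub).comp (by fun_prop) (mapsTo_sq_mul_sq hkr.le))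
  refine (hasDerivAt_integral_of_dominated_loc_of_deriv_le
    (F' := fun x t => 2 * x * t ^ 2 * g' (x ^ 2 * t ^ 2) / √(1 - t ^ 2)) hs
    (eventually_of_mem hs fun x hx =>
      (intervalIntegrable_iff.1 (hF_int x hx)).aestronglyMeasurable)
    (hF_int k hkr) (intervalIntegrable_iff.1 hF'_int).aestronglyMeasurable ?bound
    (intervalIntegrable_div_sqrt_one_sub_sq (continuousOn_const (c := 2 * r * C))) ?deriv).2
  case bound =>
    refine Eventually.of_forall fun t ht x (hx : |x| < r) => ?_
    rw [uIoc_of_le zero_le_one] at ht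
    have hgC := hC _ (mapsTo_sq_mul_sq hx.le (Ioc_subset_Icc_self ht))
    have ht2 : t ^ 2 ≤ 1 := pow_le_one₀ ht.1.le ht.2
    have hr₀ : 0 ≤ r := (abs_nonneg k).trans hkr.le
    rw [norm_div, Real.norm_of_nonneg (Real.sqrt_nonneg _)]
    gcongr
    calc ‖2 * x * t ^ 2 * g' (x ^ 2 * t ^ 2)‖ = 2 * |x| * t ^ 2 * ‖g' (x ^ 2 * t ^ 2)‖ := by
          simp [norm_mul]
      _ ≤ 2 * r * 1 * C := by gcongr
      _ = 2 * r * C := by ring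
  case deriv =>
    refine Eventually.of_forall fun t ht x (hx : |x| < r) => ?_
    rw [uIoc_of_le zero_le_one] at ht
    have hu := hsub (mapsTo_sq_mul_sq hx.le (Ioc_subset_Icc_self ht))
    have := ((hg _ hu).comp x ((hasDerivAt_pow 2 x).mul_const (t ^ 2))).div_const
      (√(1 - t ^ 2))
    exact this.congr_deriv (by norm_num; ring)

theorem hasDerivAt_sqrt_one_sub {u : ℝ} (hu : u < 1) :
    HasDerivAt (fun u => √(1 - u)) (-(2 * √(1 - u))⁻¹) u := by
  refine (((hasDerivAt_id u).const_sub 1).sqrt (sub_pos.2 hu).ne').congr_deriv ?_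
  rw [div_eq_mul_inv]
  simp

section EllipticIntegrals

variable {k : ℝ}

theorem sqrt_one_sub_sq_mul_sq_pos (hk : |k| < 1) {t : ℝ} (ht : t ∈ Icc (0 : ℝ) 1) :
    0 < √(1 - k ^ 2 * t ^ 2) := by
  have hk2 : k ^ 2 < 1 := (sq_lt_one_iff_abs_lt_one k).2 hk
  have ht2 : t ^ 2 ≤ 1 := pow_le_one₀ ht.1 ht.2
  exact Real.sqrt_pos.2 (by nlinarith [sq_nonneg k])

theorem ellK_eq_integral (k : ℝ) :
    ellK k = ∫ t in (0 : ℝ)..1, (√(1 - k ^ 2 * t ^ 2))⁻¹ / √(1 - t ^ 2) := by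
  unfold ellK
  congr 1 with t
  ring

theorem intervalIntegrable_ellE_integrand (k : ℝ) :
    IntervalIntegrable (fun t => √(1 - k ^ 2 * t ^ 2) / √(1 - t ^ 2)) volume 0 1 :=
  intervalIntegrable_div_sqrt_one_sub_sq (by fun_prop)

theorem intervalIntegrable_ellK_integrand (hk : |k| < 1) :
    IntervalIntegrable (fun t => (√(1 - k ^ 2 * t ^ 2))⁻¹ / √(1 - t ^ 2)) volume 0 1 :=
  intervalIntegrable_div_sqrt_one_sub_sq <|
    ContinuousOn.inv₀ (by fun_prop) fun _ ht => (sqrt_one_sub_sq_mul_sq_pos hk ht).ne'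

theorem ellK_pos (hk : |k| < 1) : 0 < ellK k := by
  rw [ellK_eq_integral]
  refine intervalIntegral_pos_of_pos_on (intervalIntegrable_ellK_integrand hk)
    (fun t ht => ?_) one_pos
  have : 0 < 1 - t ^ 2 := by nlinarith [ht.1, ht.2]
  have := sqrt_one_sub_sq_mul_sq_pos hk (Ioo_subset_Icc_self ht)
  positivity

theorem continuousOn_sqrt_one_sub_sq_div_sqrt (hk : |k| < 1) :
    ContinuousOn (fun t : ℝ => √(1 - t ^ 2) / √(1 - k ^ 2 * t ^ 2)) (Icc 0 1) :=
  ContinuousOn.div (by fun_prop) (by fun_prop) fun _ ht => (sqrt_one_sub_sq_mul_sq_pos hk ht).ne'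

theorem integral_sqrt_one_sub_sq_div_sqrt_pos (hk : |k| < 1) :
    0 < ∫ t in (0 : ℝ)..1, √(1 - t ^ 2) / √(1 - k ^ 2 * t ^ 2) := by
  refine intervalIntegral_pos_of_pos_on
    ((continuousOn_sqrt_one_sub_sq_div_sqrt hk).intervalIntegrable_of_Icc zero_le_one)
    (fun t ht => ?_) one_pos
  have : 0 < 1 - t ^ 2 := by nlinarith [ht.1, ht.2]
  have := sqrt_one_sub_sq_mul_sq_pos hk (Ioo_subset_Icc_self ht)
  positivity

theorem ellE_sub_mul_ellK (hk : |k| < 1) :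
    ellE k - (1 - k ^ 2) * ellK k =
      k ^ 2 * ∫ t in (0 : ℝ)..1, √(1 - t ^ 2) / √(1 - k ^ 2 * t ^ 2) := by
  rw [ellE, ellK_eq_integral, ← intervalIntegral.integral_const_mul,
    ← intervalIntegral.integral_const_mul, ← integral_sub (intervalIntegrable_ellE_integrand k)
      ((intervalIntegrable_ellK_integrand hk).const_mul _)]
  refine integral_congr fun t ht => ?_
  rw [uIcc_of_le zero_le_one] at ht
  have hb := sqrt_one_sub_sq_mul_sq_pos hk ht
  have hb2 := Real.sq_sqrt (Real.sqrt_pos.1 hb).le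
  have ha2 := Real.sq_sqrt (show 0 ≤ 1 - t ^ 2 by nlinarith [ht.1, ht.2])
  -- at `t = 1` both sides are `0`, division by zero being zero
  rcases eq_or_ne (√(1 - t ^ 2)) 0 with ha | ha
  · simp [ha]
  · field_simp
    linear_combination hb2 - k ^ 2 * ha2

theorem mul_ellK_lt_ellE (hk₀ : k ≠ 0) (hk : |k| < 1) : (1 - k ^ 2) * ellK k < ellE k := by
  have := ellE_sub_mul_ellK hk
  have := mul_pos (pow_pos (abs_pos.2 hk₀) 2) (integral_sqrt_one_sub_sq_div_sqrt_pos hk)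
  rw [sq_abs] at this
  linarith

theorem integral_sqrt_one_sub_sq_div_sqrt_eq (hk : |k| < 1) :
    ∫ t in (0 : ℝ)..1, √(1 - t ^ 2) / √(1 - k ^ 2 * t ^ 2) =
      (1 - k ^ 2) * ∫ t in (0 : ℝ)..1,
        t ^ 2 / ((1 - k ^ 2 * t ^ 2) * √(1 - k ^ 2 * t ^ 2)) / √(1 - t ^ 2) := by
  have hb : ∀ t ∈ Icc (0 : ℝ) 1, √(1 - k ^ 2 * t ^ 2) ≠ 0 := fun t ht =>
    (sqrt_one_sub_sq_mul_sq_pos hk ht).ne'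
  have hCC := (continuousOn_sqrt_one_sub_sq_div_sqrt hk).intervalIntegrable_of_Icc
    (μ := volume) zero_le_one
  have hW : IntervalIntegrable
      (fun t => t ^ 2 / ((1 - k ^ 2 * t ^ 2) * √(1 - k ^ 2 * t ^ 2)) / √(1 - t ^ 2))
      volume 0 1 :=
    intervalIntegrable_div_sqrt_one_sub_sq <| ContinuousOn.div (by fun_prop) (by fun_prop)
      fun t ht => mul_ne_zero (Real.sqrt_pos.1 (sqrt_one_sub_sq_mul_sq_pos hk ht)).ne' (hb t ht)
  -- `t √(1 - t²) / √(1 - k² t²)` vanishes at both ends and differentiates to the difference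
  have hderiv : ∀ t ∈ Ioo (0 : ℝ) 1,
      HasDerivAt (fun t => t * √(1 - t ^ 2) / √(1 - k ^ 2 * t ^ 2))
        (√(1 - t ^ 2) / √(1 - k ^ 2 * t ^ 2) - (1 - k ^ 2) *
          (t ^ 2 / ((1 - k ^ 2 * t ^ 2) * √(1 - k ^ 2 * t ^ 2)) / √(1 - t ^ 2))) t := by
    intro t ht
    have ha : 0 < 1 - t ^ 2 := by nlinarith [ht.1, ht.2]
    have hb' := sqrt_one_sub_sq_mul_sq_pos hk (Ioo_subset_Icc_self ht)
    have hkt := Real.sqrt_pos.1 hb'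
    have ha' := Real.sqrt_pos.2 ha
    have ha2 := Real.sq_sqrt ha.le
    have hb2 := Real.sq_sqrt hkt.le
    have hsa := ((hasDerivAt_pow 2 t).const_sub 1).sqrt ha.ne'
    have hsb := (((hasDerivAt_pow 2 t).const_mul (k ^ 2)).const_sub 1).sqrt hkt.ne'
    refine (((hasDerivAt_id t).mul hsa).div hsb hb'.ne').congr_deriv ?_
    simp only [Pi.mul_apply, id]
    generalize √(1 - t ^ 2) = A at *
    generalize √(1 - k ^ 2 * t ^ 2) = B at *
    rw [← hb2]
    field_simp
    linear_combination (-2 * t ^ 2) * hb2 + 2 * t ^ 2 * k ^ 2 * ha2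
  have hftc := integral_eq_sub_of_hasDerivAt_of_le zero_le_one
    (ContinuousOn.div (by fun_prop) (by fun_prop) hb) hderiv (hCC.sub (hW.const_mul _))
  rw [integral_sub hCC (hW.const_mul _), intervalIntegral.integral_const_mul] at hftc
  simp only [Pi.div_apply, one_pow, sub_self, Real.sqrt_zero, mul_zero, zero_mul, zero_div]
    at hftc
  linarith

theorem hasDerivAt_ellE (hk₀ : k ≠ 0) (hk : |k| < 1) :
    HasDerivAt ellE ((ellE k - ellK k) / k) k := by
  have hd := hasDerivAt_integral_comp_mul_sq_div_sqrt (fun u hu => hasDerivAt_sqrt_one_sub hu)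
    (ContinuousOn.neg <| ContinuousOn.inv₀ (by fun_prop) fun u hu =>
      mul_ne_zero two_ne_zero (Real.sqrt_pos.2 (sub_pos.2 hu)).ne') hk
  refine (show HasDerivAt ellE _ k from hd).congr_deriv ?_
  rw [ellE, ellK_eq_integral, ← integral_sub (intervalIntegrable_ellE_integrand k)
    (intervalIntegrable_ellK_integrand hk), ← intervalIntegral.integral_div]
  refine integral_congr fun t ht => ?_
  rw [uIcc_of_le zero_le_one] at ht
  have hb := sqrt_one_sub_sq_mul_sq_pos hk ht
  have hb2 := Real.sq_sqrt (Real.sqrt_pos.1 hb).le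
  field_simp
  linear_combination -(√(1 - t ^ 2))⁻¹ * hb2

theorem hasDerivAt_ellK (hk₀ : k ≠ 0) (hk : |k| < 1) :
    HasDerivAt ellK (ellE k / (k * (1 - k ^ 2)) - ellK k / k) k := by
  have hg : ∀ u < (1 : ℝ),
      HasDerivAt (fun u => (√(1 - u))⁻¹) (2 * (1 - u) * √(1 - u))⁻¹ u := by
    intro u hu
    refine ((hasDerivAt_sqrt_one_sub hu).inv
      (Real.sqrt_pos.2 (sub_pos.2 hu)).ne').congr_deriv ?_
    rw [Real.sq_sqrt (sub_pos.2 hu).le]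
    field_simp
  have hd := hasDerivAt_integral_comp_mul_sq_div_sqrt hg
    (ContinuousOn.inv₀ (by fun_prop) fun u hu => mul_ne_zero
      (mul_ne_zero two_ne_zero (sub_pos.2 hu).ne') (Real.sqrt_pos.2 (sub_pos.2 hu)).ne') hk
  rw [← funext ellK_eq_integral] at hd
  refine hd.congr_deriv ?_
  have hk2 : 1 - k ^ 2 ≠ 0 := (sub_pos.2 ((sq_lt_one_iff_abs_lt_one k).2 hk)).ne'
  have hEK := ellE_sub_mul_ellK hk
  rw [integral_sqrt_one_sub_sq_div_sqrt_eq hk] at hEK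
  have hW : ∫ t in (0 : ℝ)..1,
        2 * k * t ^ 2 * (2 * (1 - k ^ 2 * t ^ 2) * √(1 - k ^ 2 * t ^ 2))⁻¹ / √(1 - t ^ 2) =
      k * ∫ t in (0 : ℝ)..1,
        t ^ 2 / ((1 - k ^ 2 * t ^ 2) * √(1 - k ^ 2 * t ^ 2)) / √(1 - t ^ 2) := by
    rw [← intervalIntegral.integral_const_mul]
    congr 1 with t
    field_simp
  rw [hW]
  generalize (∫ t in (0 : ℝ)..1,
    t ^ 2 / ((1 - k ^ 2 * t ^ 2) * √(1 - k ^ 2 * t ^ 2)) / √(1 - t ^ 2)) = W at hEK ⊢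
  field_simp
  linear_combination -hEK

theorem I₁_div_I₂_pow_three_eq (k : ℝ) :
    I₁ k / I₂ k ^ 3 = ((1 + k ^ 2) * ellE k - (1 - k ^ 2) * (1 + 3 * k ^ 2) / 4 * ellK k) /
      (12 * (ellE k - (1 - k ^ 2) / 2 * ellK k) ^ 3) := by
  have hs2 := Real.sq_sqrt (show 0 ≤ 2 / (1 + k ^ 2) by positivity)
  unfold I₁ I₂
  rcases eq_or_ne (ellE k - (1 - k ^ 2) / 2 * ellK k) 0 with hD | hD
  · simp [hD]
  · field_simp
    rw [hs2]
    field_simp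
    ring

theorem ellE_sub_half_mul_ellK_pos (hk₀ : k ≠ 0) (hk : |k| < 1) :
    0 < ellE k - (1 - k ^ 2) / 2 * ellK k := by
  have := mul_ellK_lt_ellE hk₀ hk
  have := ellK_pos hk
  have := sq_lt_one_iff_abs_lt_one k |>.2 hk
  nlinarith

theorem hasDerivAt_I₁_div_I₂_pow_three (hk₀ : k ≠ 0) (hk : |k| < 1) :
    HasDerivAt (fun k => I₁ k / I₂ k ^ 3)
      ((1 - k ^ 2) * ellE k * ((1 - k ^ 2) * ellK k - ellE k) /
        (16 * k * (ellE k - (1 - k ^ 2) / 2 * ellK k) ^ 4)) k := by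
  have hD := ellE_sub_half_mul_ellK_pos hk₀ hk
  have hk2 : 1 - k ^ 2 ≠ 0 := (sub_pos.2 (sq_lt_one_iff_abs_lt_one k |>.2 hk)).ne'
  have hE := hasDerivAt_ellE hk₀ hk
  have hK := hasDerivAt_ellK hk₀ hk
  have hx2 := hasDerivAt_pow 2 k
  have hnum := (((hx2.const_add 1).mul hE).sub
    ((((hx2.const_sub 1).mul ((hx2.const_mul 3).const_add 1)).div_const 4).mul hK))
  have hden := ((hE.sub (((hx2.const_sub 1).div_const 2).mul hK)).pow 3).const_mul 12
  rw [funext I₁_div_I₂_pow_three_eq]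
  refine (hnum.div hden (mul_ne_zero (by norm_num) (pow_ne_zero 3 hD.ne'))).congr_deriv ?_
  simp only [Pi.mul_apply, Pi.sub_apply, Pi.pow_apply]
  rw [div_eq_div_iff (pow_ne_zero 2 (mul_ne_zero (by norm_num) (pow_ne_zero 3 hD.ne')))
    (mul_ne_zero (mul_ne_zero (by norm_num) hk₀) (pow_ne_zero 4 hD.ne'))]
  field_simp
  ring

theorem deriv_I₁_div_I₂_pow_three_neg (hk : k ∈ Ioo 0 1) :
    deriv (fun k => I₁ k / I₂ k ^ 3) k < 0 := by
  have hk₀ : k ≠ 0 := hk.1.ne'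
  have hk₁ : |k| < 1 := abs_lt.2 ⟨by linarith [hk.1], hk.2⟩
  have h1k : 0 < 1 - k ^ 2 := by nlinarith [hk.1, hk.2]
  have hEK := mul_ellK_lt_ellE hk₀ hk₁
  have hE : 0 < ellE k := (mul_pos h1k (ellK_pos hk₁)).trans hEK
  have hD := ellE_sub_half_mul_ellK_pos hk₀ hk₁
  have := hk.1
  rw [(hasDerivAt_I₁_div_I₂_pow_three hk₀ hk₁).deriv]
  exact div_neg_of_neg_of_pos (mul_neg_of_pos_of_neg (mul_pos h1k hE) (sub_neg.2 hEK))
    (by positivity)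

end EllipticIntegrals

/-- `k ↦ I₁(k)/I₂(k)³` is strictly decreasing on `(0,1)`. -/
theorem I1_div_I2_cubed_strictAnti :
    StrictAntiOn (fun k => I₁ k / I₂ k ^ 3) (Ioo (0 : ℝ) 1) := by
  refine strictAntiOn_of_deriv_neg (convex_Ioo 0 1) (fun k hk => ?_) fun k hk => ?_
  · have hk₁ : |k| < 1 := abs_lt.2 ⟨by linarith [hk.1], hk.2⟩
    exact (hasDerivAt_I₁_div_I₂_pow_three hk.1.ne' hk₁).continuousAt.continuousWithinAt
  · rw [interior_Ioo] at hk
    exact deriv_I₁_div_I₂_pow_three_neg hk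
end

section
/- For b ∈ (0, π/2), the identity cos²b · ∫_{−b}^{b} dφ/(cos φ · √(cos⁴φ − cos⁴b)) = 2·(cos²b/√(1+cos²b))·Π(sin²b, sin b/√(1+cos²b)) holds. -/
open Real Set intervalIntegral

/-- Complete elliptic integral of the third kind. -/
noncomputable def ellPi (n k : ℝ) : ℝ :=
  ∫ x in (0 : ℝ)..1,
    1 / ((1 - n * x ^ 2) * Real.sqrt (1 - x ^ 2) * Real.sqrt (1 - k ^ 2 * x ^ 2))

/-! The substitution `φ = arcsin (sin b * sin θ)` maps `(-π/2, π/2)` onto `(-b, b)`, and since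
`cos⁴φ - cos⁴b = sin²b cos²θ (1 + cos²b - sin²b sin²θ)` it turns the integrand into
`1 / (√(1 + cos²b) (1 - sin²b sin²θ) √(1 - k² sin²θ))` with `k = sin b / √(1 + cos²b)`.
This is even in `θ`, and `x = sin θ` identifies its integral over `(0, π/2)` with
`Π(sin²b, k)`. -/

open MeasureTheory

theorem integral_deriv_mul_comp_of_deriv_nonneg {f f' g : ℝ → ℝ} {a b : ℝ} (hab : a ≤ b)
    (hf : ContinuousOn f (Icc a b)) (hff' : ∀ x ∈ Ioo a b, HasDerivAt f (f' x) x)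
    (hf' : ∀ x ∈ Ioo a b, 0 ≤ f' x) :
    ∫ x in a..b, f' x * g (f x) = ∫ u in f a..f b, g u := by
  have hmono : MonotoneOn f (Icc a b) := by
    refine monotoneOn_of_deriv_nonneg (convex_Icc a b) hf ?_ ?_ <;> rw [interior_Icc]
    · exact fun x hx ↦ (hff' x hx).differentiableAt.differentiableWithinAt
    · exact fun x hx ↦ (hff' x hx).deriv ▸ hf' x hx
  rw [integral_of_le hab, integral_of_le (hmono (left_mem_Icc.2 hab) (right_mem_Icc.2 hab) hab),
    ← integral_Icc_eq_integral_Ioc, ← integral_Icc_eq_integral_Ioc]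
  exact integral_Icc_deriv_smul_of_deriv_nonneg hf hff' hf' hab

theorem integral_neg_self_eq_two_mul_of_even {f : ℝ → ℝ} {a : ℝ} (heven : ∀ x, f (-x) = f x)
    (hf : IntervalIntegrable f volume 0 a) :
    ∫ x in -a..a, f x = 2 * ∫ x in 0..a, f x := by
  have hneg : ∫ x in -a..0, f x = ∫ x in 0..a, f x := by
    simpa [heven] using (integral_comp_neg (a := 0) (b := a) f).symm
  have hf' : IntervalIntegrable f volume (-a) 0 := by
    simpa [heven] using ((IntervalIntegrable.iff_comp_neg (f := f)).1 hf).symm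
  rw [← integral_add_adjacent_intervals hf' hf, hneg, two_mul]

noncomputable def ellPiTrigIntegrand (n k θ : ℝ) : ℝ :=
  1 / ((1 - n * sin θ ^ 2) * √(1 - k ^ 2 * sin θ ^ 2))

theorem ellPi_eq_integral_ellPiTrigIntegrand (n k : ℝ) :
    ellPi n k = ∫ θ in 0..π / 2, ellPiTrigIntegrand n k θ := by
  have hpi : 0 ≤ π / 2 := by positivity
  have hsubst := integral_deriv_mul_comp_of_deriv_nonneg hpi continuous_sin.continuousOn
    (fun θ _ ↦ hasDerivAt_sin θ) (fun θ hθ ↦ (cos_pos_of_mem_Ioo ⟨by linarith [hθ.1], hθ.2⟩).le)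
    (g := fun x ↦ 1 / ((1 - n * x ^ 2) * √(1 - x ^ 2) * √(1 - k ^ 2 * x ^ 2)))
  rw [sin_zero, sin_pi_div_two] at hsubst
  rw [ellPi, ← hsubst]
  refine integral_congr_Ioo_of_le hpi fun θ hθ ↦ ?_
  have hcos : 0 < cos θ := cos_pos_of_mem_Ioo ⟨by linarith [hθ.1], hθ.2⟩
  rw [← cos_sq', sqrt_sq hcos.le, ellPiTrigIntegrand]
  field_simp

theorem continuous_ellPiTrigIntegrand {n k : ℝ} (hn : n < 1) (hk : k ^ 2 < 1) :
    Continuous (ellPiTrigIntegrand n k) := by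
  refine continuous_const.div (by fun_prop) fun θ ↦ ?_
  have h₀ := sq_nonneg (sin θ)
  have h₁ := sin_sq_le_one θ
  have : 0 < 1 - n * sin θ ^ 2 := by
    rcases le_or_gt n 0 with hn₀ | hn₀ <;> nlinarith
  have : 0 < √(1 - k ^ 2 * sin θ ^ 2) := sqrt_pos.2 (by nlinarith)
  positivity

theorem integral_ellPiTrigIntegrand_neg_pi_div_two_pi_div_two {n k : ℝ} (hn : n < 1)
    (hk : k ^ 2 < 1) :
    ∫ θ in -(π / 2)..π / 2, ellPiTrigIntegrand n k θ = 2 * ellPi n k := by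
  rw [ellPi_eq_integral_ellPiTrigIntegrand]
  exact integral_neg_self_eq_two_mul_of_even (fun θ ↦ by simp [ellPiTrigIntegrand])
    ((continuous_ellPiTrigIntegrand hn hk).intervalIntegrable _ _)

theorem cos_arcsin_pow_four_sub_cos_pow_four (b θ : ℝ) :
    cos (arcsin (sin b * sin θ)) ^ 4 - cos b ^ 4 =
      (sin b * cos θ) ^ 2 * (1 + cos b ^ 2 - sin b ^ 2 * sin θ ^ 2) := by
  have hle : (sin b * sin θ) ^ 2 ≤ 1 := by
    rw [mul_pow]
    exact mul_le_one₀ (sin_sq_le_one b) (sq_nonneg _) (sin_sq_le_one θ)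
  rw [cos_arcsin, show cos (b : ℝ) ^ 4 = (cos b ^ 2) ^ 2 by ring,
    show ∀ x : ℝ, √x ^ 4 = (√x ^ 2) ^ 2 from fun x ↦ by ring, sq_sqrt (by linarith),
    cos_sq']
  simp only [mul_pow, cos_sq']
  ring

theorem sqrt_cos_arcsin_pow_four_sub_cos_pow_four {b θ : ℝ} (hb : 0 ≤ sin b) (hθ : 0 ≤ cos θ) :
    √(cos (arcsin (sin b * sin θ)) ^ 4 - cos b ^ 4) =
      sin b * cos θ * √(1 + cos b ^ 2) * √(1 - (sin b / √(1 + cos b ^ 2)) ^ 2 * sin θ ^ 2) := by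
  have hr : 0 < 1 + cos b ^ 2 := by positivity
  have hk : 1 - (sin b / √(1 + cos b ^ 2)) ^ 2 * sin θ ^ 2 =
      (1 + cos b ^ 2 - sin b ^ 2 * sin θ ^ 2) / (1 + cos b ^ 2) := by
    rw [div_pow, sq_sqrt hr.le]
    field_simp
  rw [cos_arcsin_pow_four_sub_cos_pow_four, sqrt_mul (sq_nonneg _), sqrt_sq (by positivity), hk,
    sqrt_div' _ hr.le]
  field_simp

theorem sin_div_sqrt_one_add_cos_sq_sq_lt_one {b : ℝ} (hb : cos b ≠ 0) :
    (sin b / √(1 + cos b ^ 2)) ^ 2 < 1 := by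
  rw [div_pow, sq_sqrt (by positivity), div_lt_one (by positivity)]
  nlinarith [sin_sq_add_cos_sq b, pow_pos (abs_pos.2 hb) 2, sq_abs (cos b)]

theorem integral_one_div_cos_mul_sqrt_cos_pow_four_sub {b : ℝ} (hb : b ∈ Ioo 0 (π / 2)) :
    ∫ φ in -b..b, 1 / (cos φ * √(cos φ ^ 4 - cos b ^ 4)) =
      1 / √(1 + cos b ^ 2) *
        ∫ θ in -(π / 2)..π / 2, ellPiTrigIntegrand (sin b ^ 2) (sin b / √(1 + cos b ^ 2)) θ := by
  obtain ⟨hb₀, hb₁⟩ := hb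
  have hs : 0 < sin b := sin_pos_of_pos_of_lt_pi hb₀ (by linarith [pi_pos])
  have hc : 0 < cos b := cos_pos_of_mem_Ioo ⟨by linarith [pi_pos], hb₁⟩
  have hlt : ∀ θ, (sin b * sin θ) ^ 2 < 1 := fun θ ↦ by
    rw [mul_pow]
    nlinarith [sin_sq_add_cos_sq b, sin_sq_le_one θ, pow_pos hc 2, sq_nonneg (sin θ)]
  have hderiv : ∀ θ, HasDerivAt (fun θ ↦ arcsin (sin b * sin θ))
      (1 / √(1 - (sin b * sin θ) ^ 2) * (sin b * cos θ)) θ := fun θ ↦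
    have hlt' := abs_lt.1 ((sq_lt_one_iff_abs_lt_one _).1 (hlt θ))
    ((hasDerivAt_arcsin hlt'.1.ne' hlt'.2.ne).comp θ ((hasDerivAt_sin θ).const_mul (sin b)) :)
  have hsubst := integral_deriv_mul_comp_of_deriv_nonneg (a := -(π / 2)) (b := π / 2)
    (by linarith [pi_pos]) (by fun_prop) (fun θ _ ↦ hderiv θ)
    (fun θ hθ ↦ by have := cos_pos_of_mem_Ioo hθ; positivity)
    (g := fun φ ↦ 1 / (cos φ * √(cos φ ^ 4 - cos b ^ 4)))
  rw [sin_neg, sin_pi_div_two, mul_neg, mul_one, arcsin_neg,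
    arcsin_sin (by linarith) (by linarith)] at hsubst
  rw [← hsubst, ← intervalIntegral.integral_const_mul]
  refine integral_congr_Ioo_of_le (by linarith [pi_pos]) fun θ hθ ↦ ?_
  have hcos : 0 < cos θ := cos_pos_of_mem_Ioo hθ
  have hX : 0 < 1 - (sin b * sin θ) ^ 2 := sub_pos.2 (hlt θ)
  have hK : 0 < 1 - (sin b / √(1 + cos b ^ 2)) ^ 2 * sin θ ^ 2 := by
    nlinarith [sin_div_sqrt_one_add_cos_sq_sq_lt_one hc.ne', sin_sq_le_one θ, sq_nonneg (sin θ)]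
  have := sqrt_pos.2 hX
  have := sqrt_pos.2 hK
  have : 0 < √(1 + cos b ^ 2) := sqrt_pos.2 (by positivity)
  rw [sqrt_cos_arcsin_pow_four_sub_cos_pow_four hs.le hcos.le, cos_arcsin, ellPiTrigIntegrand]
  field_simp
  rw [← mul_pow, sq_sqrt hX.le, mul_pow]

/-- For `b ∈ (0, π/2)`,
`cos²b ∫_{−b}^{b} dφ/(cos φ √(cos⁴φ − cos⁴b))
  = 2 (cos²b/√(1+cos²b)) Π(sin²b, sin b/√(1+cos²b))`. -/
theorem Xi_integral_eq_ellPi (b : ℝ) (hb : b ∈ Ioo 0 (π / 2)) :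
    Real.cos b ^ 2 *
      ∫ φ in (-b)..b, 1 / (Real.cos φ * Real.sqrt (Real.cos φ ^ 4 - Real.cos b ^ 4)) =
    2 * (Real.cos b ^ 2 / Real.sqrt (1 + Real.cos b ^ 2)) *
      ellPi (Real.sin b ^ 2) (Real.sin b / Real.sqrt (1 + Real.cos b ^ 2)) := by
  have hc : 0 < cos b := cos_pos_of_mem_Ioo ⟨by linarith [hb.1, pi_pos], hb.2⟩
  have hn : sin b ^ 2 < 1 := by nlinarith [sin_sq_add_cos_sq b, pow_pos hc 2]
  rw [integral_one_div_cos_mul_sqrt_cos_pow_four_sub hb,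
    integral_ellPiTrigIntegrand_neg_pi_div_two_pi_div_two hn
      (sin_div_sqrt_one_add_cos_sq_sq_lt_one hc.ne')]
  ring
end

section
/- Consider the periodic Sturm–Liouville problem −(p(t)h′(t))′ + q(t)h(t) = λh(t) with p, q smooth, positive, and t₀-periodic, and h t₀-periodic. If p and q are in fact t₀/(2n)-periodic for some positive integer n, then every t₀/(2n)-antiperiodic eigenfunction (h(t + t₀/(2n)) ≡ −h(t)) has exactly 2n(2k+1) zeros on [0, t₀) for some integer k ≥ 0. -/
open Real Set Filter Topology


/-- Sign constancy on a zero-free interval. -/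
private lemma sl_sign_const {f : ℝ → ℝ} (hf : Continuous f) {a b : ℝ} (hab : a ≤ b)
    (hz : ∀ t ∈ Icc a b, f t ≠ 0) : 0 < f a * f b := by
  rcases lt_or_gt_of_ne (hz a ⟨le_rfl, hab⟩) with ha | ha <;>
    rcases lt_or_gt_of_ne (hz b ⟨hab, le_rfl⟩) with hb | hb
  · nlinarith
  · obtain ⟨t, ht, h0⟩ := intermediate_value_Icc hab hf.continuousOn ⟨ha.le, hb.le⟩
    exact absurd h0 (hz t ht)
  · obtain ⟨t, ht, h0⟩ := intermediate_value_Icc' hab hf.continuousOn ⟨hb.le, ha.le⟩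
    exact absurd h0 (hz t ht)
  · nlinarith

private lemma sl_slope_pos {f : ℝ → ℝ} {z d : ℝ} (hf : HasDerivAt f d z) (hz : f z = 0)
    (hd : d ≠ 0) : ∀ᶠ t in 𝓝[≠] z, 0 < slope f z t * d := by
  have hslope : Tendsto (slope f z) (𝓝[≠] z) (𝓝 d) := hasDerivAt_iff_tendsto_slope.1 hf
  have : Tendsto (fun t => slope f z t * d) (𝓝[≠] z) (𝓝 (d * d)) := hslope.mul_const d
  exact this.eventually (eventually_gt_nhds (mul_self_pos.2 hd))

private lemma sl_slope_eq {f : ℝ → ℝ} {z : ℝ} (hz : f z = 0) {t : ℝ} (ht : t ≠ z) :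
    f t = slope f z t * (t - z) := by
  rw [slope_def_field, hz, sub_zero, div_mul_cancel₀]
  exact sub_ne_zero.2 ht

/-- near a simple zero, the function has sign `d` to the right. -/
private lemma sl_near_right {f : ℝ → ℝ} {z d : ℝ} (hf : HasDerivAt f d z) (hz : f z = 0)
    (hd : d ≠ 0) {ε : ℝ} (hε : 0 < ε) : ∃ t, z < t ∧ t < z + ε ∧ 0 < f t * d := by
  have h1 : ∀ᶠ t in 𝓝[>] z, 0 < slope f z t * d :=
    (sl_slope_pos hf hz hd).filter_mono (nhdsWithin_mono z fun t ht => ne_of_gt ht)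
  have h2 : Ioo z (z + ε) ∈ 𝓝[>] z := Ioo_mem_nhdsGT_of_mem ⟨le_rfl, by linarith⟩
  obtain ⟨t, ht1, ht2⟩ := (h1.and (Filter.eventually_of_mem h2 (fun x hx => hx))).exists
  refine ⟨t, ht2.1, ht2.2, ?_⟩
  rw [sl_slope_eq hz (ne_of_gt ht2.1)]
  have : 0 < t - z := by linarith [ht2.1]
  nlinarith

private lemma sl_near_left {f : ℝ → ℝ} {z d : ℝ} (hf : HasDerivAt f d z) (hz : f z = 0)
    (hd : d ≠ 0) {ε : ℝ} (hε : 0 < ε) : ∃ t, z - ε < t ∧ t < z ∧ f t * d < 0 := by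
  have h1 : ∀ᶠ t in 𝓝[<] z, 0 < slope f z t * d :=
    (sl_slope_pos hf hz hd).filter_mono (nhdsWithin_mono z fun t ht => ne_of_lt ht)
  have h2 : Ioo (z - ε) z ∈ 𝓝[<] z := Ioo_mem_nhdsLT_of_mem ⟨by linarith, le_rfl⟩
  obtain ⟨t, ht1, ht2⟩ := (h1.and (Filter.eventually_of_mem h2 (fun x hx => hx))).exists
  refine ⟨t, ht2.1, ht2.2, ?_⟩
  rw [sl_slope_eq hz (ne_of_lt ht2.2)]
  have : t - z < 0 := by linarith [ht2.2]
  nlinarith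

private lemma sl_isolated {f : ℝ → ℝ} {z d : ℝ} (hf : HasDerivAt f d z) (hz : f z = 0)
    (hd : d ≠ 0) : ∀ᶠ t in 𝓝[≠] z, f t ≠ 0 := by
  filter_upwards [sl_slope_pos hf hz hd, self_mem_nhdsWithin] with t ht htne
  rw [sl_slope_eq hz htne]
  intro hcon
  rcases mul_eq_zero.1 hcon with h | h
  · rw [h] at ht; simp at ht
  · exact (sub_ne_zero.2 htne) h

private lemma sl_zeros_finite {f : ℝ → ℝ} (hf : Continuous f)
    (hs : ∀ c, f c = 0 → ∃ d, d ≠ 0 ∧ HasDerivAt f d c) (a b : ℝ) :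
    {t ∈ Icc a b | f t = 0}.Finite := by
  have hcl : IsClosed {t : ℝ | f t = 0} := isClosed_eq hf continuous_const
  have hcomp : IsCompact {t ∈ Icc a b | f t = 0} := isCompact_Icc.inter_right hcl
  apply hcomp.finite
  rw [isDiscrete_iff_nhdsNE]
  intro z hz
  obtain ⟨d, hd, hder⟩ := hs z hz.2
  rw [inf_principal_eq_bot]
  filter_upwards [sl_isolated hder hz.2 hd] with t ht hts
  exact ht hts.2

private lemma sl_parity {f : ℝ → ℝ} (hf : Continuous f)
    (hs : ∀ c, f c = 0 → ∃ d, d ≠ 0 ∧ HasDerivAt f d c) :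
    ∀ m : ℕ, ∀ a b : ℝ, a < b → f a ≠ 0 → f b ≠ 0 →
      {t ∈ Ioo a b | f t = 0}.ncard = m → 0 < f a * f b * (-1 : ℝ) ^ m := by
  intro m
  induction m using Nat.strong_induction_on with
  | _ m ih =>
    intro a b hab ha hb hcard
    have hfin : {t ∈ Ioo a b | f t = 0}.Finite :=
      (sl_zeros_finite hf hs a b).subset fun t ht => ⟨Ioo_subset_Icc_self ht.1, ht.2⟩
    rcases Nat.eq_zero_or_pos m with hm | hm
    · subst hm
      have hempty : {t ∈ Ioo a b | f t = 0} = ∅ := by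
        rwa [← Set.ncard_eq_zero hfin]
      have : ∀ t ∈ Icc a b, f t ≠ 0 := by
        intro t ht hft
        rcases eq_or_lt_of_le ht.1 with h1 | h1
        · exact ha (h1 ▸ hft)
        rcases eq_or_lt_of_le ht.2 with h2 | h2
        · exact hb (h2 ▸ hft)
        have hmem : t ∈ ({t ∈ Ioo a b | f t = 0} : Set ℝ) := ⟨⟨h1, h2⟩, hft⟩
        rw [hempty] at hmem
        exact hmem
      simpa using sl_sign_const hf hab.le this
    · -- there is a largest zero z in (a,b)
      have hne : {t ∈ Ioo a b | f t = 0}.Nonempty := by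
        rw [Set.nonempty_iff_ne_empty]
        intro hcon
        rw [hcon] at hcard
        simp at hcard; omega
      obtain ⟨z, hzmem, hzmax⟩ := Set.Finite.exists_maximalFor id _ hfin hne
      have hzmax' : ∀ y ∈ {t ∈ Ioo a b | f t = 0}, y ≤ z := by
        intro y hy
        by_contra hlt
        push_neg at hlt
        exact absurd (hzmax hy hlt.le) (not_le.2 hlt)
      obtain ⟨d, hd, hder⟩ := hs z hzmem.2
      -- no zeros in (z, b)
      have hnoz : ∀ t, z < t → t ≤ b → f t ≠ 0 := by
        intro t h1 h2 hft
        rcases eq_or_lt_of_le h2 with h2' | h2'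
        · exact hb (h2' ▸ hft)
        · exact absurd (hzmax' t ⟨⟨hzmem.1.1.trans h1, h2'⟩, hft⟩) (not_le.2 h1)
      -- pick t₁ ∈ (z,b) with f t₁ * d > 0
      obtain ⟨t₁, ht₁z, ht₁b, ht₁d⟩ := sl_near_right hder hzmem.2 hd (sub_pos.2 hzmem.1.2)
      rw [add_sub_cancel] at ht₁b
      have ht₁B : 0 < f t₁ * f b := by
        apply sl_sign_const hf ht₁b.le
        intro t ht
        exact hnoz t (ht₁z.trans_le ht.1) ht.2
      -- pick c ∈ (max(zeros in (a,z) ∪ {a}), z) with f c * d < 0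
      have hfin' : (insert a {t ∈ Ioo a z | f t = 0}).Finite := by
        apply Set.Finite.insert
        apply hfin.subset
        intro t ht
        exact ⟨⟨ht.1.1, ht.1.2.trans hzmem.1.2⟩, ht.2⟩
      obtain ⟨w, hwmem, hwmax⟩ := Set.Finite.exists_maximalFor id _ hfin'
        ⟨a, Set.mem_insert a _⟩
      have hwlt : w < z := by
        rcases hwmem with h | h
        · exact h ▸ hzmem.1.1
        · exact h.1.2
      have hwmax' : ∀ y ∈ insert a {t ∈ Ioo a z | f t = 0}, y ≤ w := by
        intro y hy
        by_contra hlt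
        push_neg at hlt
        exact absurd (hwmax hy hlt.le) (not_le.2 hlt)
      obtain ⟨c, hcw, hcz, hcd⟩ := sl_near_left hder hzmem.2 hd (sub_pos.2 hwlt)
      rw [sub_sub_cancel] at hcw
      have hac : a < c := lt_of_le_of_lt (hwmax' a (Set.mem_insert a _)) hcw
      have hcne : f c ≠ 0 := fun h => by rw [h] at hcd; simp at hcd
      -- zeros in (a,c) are exactly zeros in (a,z) minus nothing
      have hset : {t ∈ Ioo a c | f t = 0} = {t ∈ Ioo a z | f t = 0} := by
        ext t
        constructor
        · rintro ⟨⟨h1, h2⟩, h3⟩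
          exact ⟨⟨h1, h2.trans hcz⟩, h3⟩
        · rintro ⟨⟨h1, h2⟩, h3⟩
          refine ⟨⟨h1, ?_⟩, h3⟩
          exact lt_of_le_of_lt (hwmax' t (Set.mem_insert_of_mem _ ⟨⟨h1, h2⟩, h3⟩)) hcw
      -- and the big zero set is insert z (zeros in (a,z))
      have hbig : {t ∈ Ioo a b | f t = 0} = insert z {t ∈ Ioo a z | f t = 0} := by
        ext t
        constructor
        · rintro ⟨⟨h1, h2⟩, h3⟩
          rcases eq_or_lt_of_le (hzmax' t ⟨⟨h1, h2⟩, h3⟩) with h | h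
          · exact Or.inl h
          · exact Or.inr ⟨⟨h1, h⟩, h3⟩
        · rintro (rfl | ⟨⟨h1, h2⟩, h3⟩)
          · exact hzmem
          · exact ⟨⟨h1, h2.trans hzmem.1.2⟩, h3⟩
      have hznotmem : z ∉ {t ∈ Ioo a z | f t = 0} := fun h => absurd h.1.2 (lt_irrefl z)
      have hcard' : {t ∈ Ioo a z | f t = 0}.ncard = m - 1 := by
        have hfin2 : {t ∈ Ioo a z | f t = 0}.Finite :=
          hfin.subset fun t ht => ⟨⟨ht.1.1, ht.1.2.trans hzmem.1.2⟩, ht.2⟩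
        rw [hbig, Set.ncard_insert_of_notMem hznotmem hfin2] at hcard
        omega
      have hIH := ih (m - 1) (by omega) a c hac ha hcne (hset ▸ hcard')
      -- combine signs
      have hm1 : (-1 : ℝ) ^ m = (-1 : ℝ) ^ (m - 1) * (-1) := by
        rw [← pow_succ]
        congr 1
        omega
      rw [hm1]
      have ht₁ne : f t₁ ≠ 0 := fun hh => by rw [hh] at ht₁d; simp at ht₁d
      have hc2 : 0 < f c ^ 2 := by positivity
      have ht2 : 0 < f t₁ ^ 2 := by positivity
      have hd2 : 0 < d ^ 2 := by positivity
      have hCD : f c * f t₁ < 0 := by nlinarith [mul_pos ht₁d (neg_pos.2 hcd)]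
      have hCB : f c * f b < 0 := by nlinarith [mul_pos (neg_pos.2 hCD) ht₁B]
      nlinarith [mul_pos hIH (neg_pos.2 hCB)]

private lemma sl_simple_zeros (p q h : ℝ → ℝ) (lam pm Qb : ℝ) (hpm : 0 < pm)
    (hple : ∀ t, pm ≤ p t) (hQb : ∀ t, |q t - lam| ≤ Qb)
    (hp_pos : ∀ t, 0 < p t)
    (hh : Continuous h) (hw : Continuous (fun s => p s * deriv h s))
    (hder : ∀ t, HasDerivAt h (deriv h t) t)
    (hwd : ∀ t, HasDerivAt (fun s => p s * deriv h s) ((q t - lam) * h t) t)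
    (hne : ∃ t, h t ≠ 0) :
    ∀ c, h c = 0 → deriv h c ≠ 0 := by
  intro c hc hdc
  set v : ℝ → ℝ × ℝ → ℝ × ℝ := fun t x => (x.2 / p t, (q t - lam) * x.1) with hv
  set Kr : ℝ := max (1 / pm) Qb with hKr
  have hKr0 : 0 ≤ Kr := le_trans (by positivity) (le_max_left _ _)
  have hcoe : (Kr.toNNReal : ℝ) = Kr := Real.coe_toNNReal _ hKr0
  have hlip : ∀ t, LipschitzOnWith Kr.toNNReal (v t) univ := by
    intro t
    apply LipschitzOnWith.of_dist_le_mul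
    intro x _ y _
    rw [hcoe, Prod.dist_eq, Prod.dist_eq]
    have hd1 : dist x.1 y.1 ≤ max (dist x.1 y.1) (dist x.2 y.2) := le_max_left _ _
    have hd2 : dist x.2 y.2 ≤ max (dist x.1 y.1) (dist x.2 y.2) := le_max_right _ _
    apply max_le
    · show dist (x.2 / p t) (y.2 / p t) ≤ _
      rw [Real.dist_eq, div_sub_div_same, abs_div, abs_of_pos (hp_pos t)]
      calc |x.2 - y.2| / p t ≤ |x.2 - y.2| / pm :=
            div_le_div_of_nonneg_left (abs_nonneg _) hpm (hple t)
        _ = (1 / pm) * |x.2 - y.2| := by ring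
        _ ≤ Kr * max (dist x.1 y.1) (dist x.2 y.2) := by
            apply mul_le_mul (le_max_left _ _) _ (abs_nonneg _) hKr0
            rw [← Real.dist_eq]; exact hd2
    · show dist ((q t - lam) * x.1) ((q t - lam) * y.1) ≤ _
      rw [Real.dist_eq, ← mul_sub, abs_mul]
      apply mul_le_mul (le_trans (hQb t) (le_max_right _ _)) _ (abs_nonneg _) hKr0
      rw [← Real.dist_eq]; exact hd1
  set f : ℝ → ℝ × ℝ := fun t => (h t, p t * deriv h t) with hf
  have hfd : ∀ t, HasDerivAt f (v t (f t)) t := by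
    intro t
    have h1 : HasDerivAt f (deriv h t, (q t - lam) * h t) t := (hder t).prodMk (hwd t)
    have h2 : (deriv h t, (q t - lam) * h t) = v t (f t) := by
      simp only [hv, hf]
      rw [mul_div_cancel_left₀ _ (ne_of_gt (hp_pos t))]
    rwa [h2] at h1
  have key : ∀ t : ℝ, h t = 0 := by
    intro t
    set R : ℝ := |t - c| + 1 with hR
    have hR0 : 0 < R := by positivity
    have hmem : c ∈ Ioo (c - R) (c + R) := ⟨by linarith, by linarith⟩
    have heq : EqOn f (fun _ => ((0 : ℝ), (0 : ℝ))) (Icc (c - R) (c + R)) := by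
      apply ODE_solution_unique_of_mem_Icc (fun t _ => hlip t) hmem
      · exact ((hh.prodMk hw)).continuousOn
      · exact fun s _ => hfd s
      · exact fun s _ => mem_univ _
      · exact continuousOn_const
      · intro s _
        have : v s ((0 : ℝ), (0 : ℝ)) = ((0 : ℝ), (0 : ℝ)) := by
          simp [hv]
        rw [this]
        exact hasDerivAt_const s _
      · exact fun s _ => mem_univ _
      · show f c = _
        simp [hf, hc, hdc]
    have ht : t ∈ Icc (c - R) (c + R) := by
      constructor <;> [skip; skip] <;> cases abs_cases (t - c) <;> linarith [abs_nonneg (t - c)]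
    have := heq ht
    simpa [hf] using congrArg Prod.fst this
  obtain ⟨t, ht⟩ := hne
  exact ht (key t)

private lemma sl_count_blocks {g : ℝ → ℝ} {T : ℝ} (hT : 0 < T)
    (hz : ∀ x, g (x + T) = 0 ↔ g x = 0)
    (hfin : ∀ a b : ℝ, {t ∈ Icc a b | g t = 0}.Finite) :
    ∀ j : ℕ, {t ∈ Ico 0 ((j : ℝ) * T) | g t = 0}.ncard
      = j * {t ∈ Ico 0 T | g t = 0}.ncard := by
  have hzk : ∀ k : ℕ, ∀ x, g (x + (k : ℝ) * T) = 0 ↔ g x = 0 := by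
    intro k
    induction k with
    | zero => simp
    | succ k ihk =>
      intro x
      have : x + ((k : ℝ) + 1) * T = (x + (k : ℝ) * T) + T := by ring
      push_cast
      rw [this, hz, ihk]
  intro j
  induction j with
  | zero => simp
  | succ j ihj =>
    have h0j : (0 : ℝ) ≤ (j : ℝ) * T := by positivity
    have hjj : (j : ℝ) * T ≤ ((j : ℝ) + 1) * T := by nlinarith
    have hsplit : {t ∈ Ico (0:ℝ) (((j:ℝ)+1) * T) | g t = 0}
        = {t ∈ Ico (0:ℝ) ((j:ℝ) * T) | g t = 0}
          ∪ {t ∈ Ico ((j:ℝ) * T) (((j:ℝ)+1) * T) | g t = 0} := by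
      ext x
      constructor
      · rintro ⟨⟨hx0, hx1⟩, hgx⟩
        rcases lt_or_ge x ((j:ℝ) * T) with hc | hc
        · exact Or.inl ⟨⟨hx0, hc⟩, hgx⟩
        · exact Or.inr ⟨⟨hc, hx1⟩, hgx⟩
      · rintro (⟨⟨hx0, hx1⟩, hgx⟩ | ⟨⟨hx0, hx1⟩, hgx⟩)
        · exact ⟨⟨hx0, lt_of_lt_of_le hx1 hjj⟩, hgx⟩
        · exact ⟨⟨le_trans h0j hx0, hx1⟩, hgx⟩
    have himg : {t ∈ Ico ((j:ℝ) * T) (((j:ℝ)+1) * T) | g t = 0}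
        = (fun x => x + (j : ℝ) * T) '' {t ∈ Ico (0:ℝ) T | g t = 0} := by
      ext x
      constructor
      · rintro ⟨⟨hx0, hx1⟩, hgx⟩
        refine ⟨x - (j:ℝ) * T, ⟨⟨by linarith, by linarith⟩, ?_⟩, by ring⟩
        rw [← hzk j (x - (j:ℝ) * T)]
        have : x - (j:ℝ) * T + (j:ℝ) * T = x := by ring
        rw [this]; exact hgx
      · rintro ⟨y, ⟨⟨hy0, hy1⟩, hgy⟩, rfl⟩
        refine ⟨⟨?_, ?_⟩, (hzk j y).2 hgy⟩
        · show (j:ℝ) * T ≤ y + (j:ℝ) * T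
          linarith
        · show y + (j:ℝ) * T < ((j:ℝ)+1) * T
          nlinarith
    have hdisj : Disjoint {t ∈ Ico (0:ℝ) ((j:ℝ) * T) | g t = 0}
        {t ∈ Ico ((j:ℝ) * T) (((j:ℝ)+1) * T) | g t = 0} := by
      apply Set.disjoint_left.2
      rintro x ⟨⟨_, hx1⟩, _⟩ ⟨⟨hx2, _⟩, _⟩
      linarith
    have hf1 : {t ∈ Ico (0:ℝ) ((j:ℝ) * T) | g t = 0}.Finite :=
      (hfin 0 ((j:ℝ) * T)).subset fun t ht => ⟨⟨ht.1.1, ht.1.2.le⟩, ht.2⟩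
    have hf2 : {t ∈ Ico ((j:ℝ) * T) (((j:ℝ)+1) * T) | g t = 0}.Finite :=
      (hfin ((j:ℝ) * T) (((j:ℝ)+1) * T)).subset fun t ht => ⟨⟨ht.1.1, ht.1.2.le⟩, ht.2⟩
    have hcast : ((j + 1 : ℕ) : ℝ) = (j : ℝ) + 1 := by push_cast; ring
    rw [hcast, hsplit, Set.ncard_union_eq hdisj hf1 hf2, ihj, himg,
      Set.ncard_image_of_injective _ (add_left_injective _)]
    ring

private lemma sl_odd_count {h : ℝ → ℝ} {T : ℝ} (hT : 0 < T)
    (hh : Continuous h)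
    (hs : ∀ c, h c = 0 → ∃ d, d ≠ 0 ∧ HasDerivAt h d c)
    (hanti : ∀ t, h (t + T) = -h t)
    (hanti' : ∀ t, deriv h (t + T) = -deriv h t) :
    ∃ k : ℕ, {t ∈ Ico 0 T | h t = 0}.ncard = 2 * k + 1 := by
  have hTval : h T = -h 0 := by have := hanti 0; rwa [zero_add] at this
  have hZofin : {t ∈ Ioo 0 T | h t = 0}.Finite :=
    (sl_zeros_finite hh hs 0 T).subset fun t ht => ⟨Ioo_subset_Icc_self ht.1, ht.2⟩
  by_cases h0 : h 0 = 0
  · -- endpoint zero case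
    obtain ⟨d, hd, hder0⟩ := hs 0 h0
    have hTz : h T = 0 := by rw [hTval, h0, neg_zero]
    have hderiv0 : deriv h 0 = d := hder0.deriv
    have hdT : deriv h T = -d := by
      have := hanti' 0; rwa [zero_add, hderiv0] at this
    have hderT : HasDerivAt h (-d) T := by
      obtain ⟨d', hd', hder'⟩ := hs T hTz
      rwa [show d' = -d by rw [← hder'.deriv, hdT]] at hder'
    -- min of insert T Zo
    obtain ⟨w, hwmem, hwmin⟩ := Set.exists_min_image (insert T {t ∈ Ioo 0 T | h t = 0})
      id (hZofin.insert T) ⟨T, Set.mem_insert T _⟩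
    have hw0 : 0 < w := by
      rcases hwmem with rfl | hw
      · exact hT
      · exact hw.1.1
    have hwT : w ≤ T := hwmin T (Set.mem_insert T _)
    obtain ⟨a, ha0, haw, had⟩ := sl_near_right hder0 h0 hd hw0
    rw [zero_add] at haw
    have haT : a < T := lt_of_lt_of_le haw hwT
    have hane : h a ≠ 0 := fun hc => by rw [hc] at had; simp at had
    obtain ⟨v, hvmem, hvmax⟩ := Set.exists_max_image (insert a {t ∈ Ioo 0 T | h t = 0})
      id (hZofin.insert a) ⟨a, Set.mem_insert a _⟩
    have hvT : v < T := by
      rcases hvmem with rfl | hv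
      · exact haT
      · exact hv.1.2
    have hav : a ≤ v := hvmax a (Set.mem_insert a _)
    obtain ⟨b, hvb, hbT, hbd⟩ := sl_near_left hderT hTz (neg_ne_zero.2 hd) (sub_pos.2 hvT)
    rw [sub_sub_cancel] at hvb
    have hab : a < b := lt_of_le_of_lt hav hvb
    have hbd' : 0 < h b * d := by nlinarith
    have hbne : h b ≠ 0 := fun hc => by rw [hc] at hbd'; simp at hbd'
    have hZeq : {t ∈ Ioo a b | h t = 0} = {t ∈ Ioo 0 T | h t = 0} := by
      ext t
      constructor
      · rintro ⟨⟨h1, h2⟩, h3⟩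
        exact ⟨⟨ha0.trans h1, h2.trans hbT⟩, h3⟩
      · rintro ⟨⟨h1, h2⟩, h3⟩
        refine ⟨⟨?_, ?_⟩, h3⟩
        · exact lt_of_lt_of_le haw (hwmin t (Set.mem_insert_of_mem _ ⟨⟨h1, h2⟩, h3⟩))
        · exact lt_of_le_of_lt (hvmax t (Set.mem_insert_of_mem _ ⟨⟨h1, h2⟩, h3⟩)) hvb
    have hpar := sl_parity hh hs ({t ∈ Ioo 0 T | h t = 0}.ncard) a b hab hane hbne
      (by rw [hZeq])
    have hd2 : 0 < d ^ 2 := by positivity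
    have haby : 0 < h a * h b := by nlinarith [mul_pos had hbd']
    have heven : Even ({t ∈ Ioo 0 T | h t = 0}.ncard) := by
      by_contra hodd
      rw [Nat.not_even_iff_odd] at hodd
      rw [hodd.neg_one_pow] at hpar
      nlinarith
    obtain ⟨k, hk⟩ := heven
    refine ⟨k, ?_⟩
    have hins : {t ∈ Ico 0 T | h t = 0} = insert 0 {t ∈ Ioo 0 T | h t = 0} := by
      ext t
      constructor
      · rintro ⟨⟨h1, h2⟩, h3⟩
        rcases eq_or_lt_of_le h1 with h1' | h1'
        · exact Or.inl h1'.symm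
        · exact Or.inr ⟨⟨h1', h2⟩, h3⟩
      · rintro (rfl | ⟨⟨h1, h2⟩, h3⟩)
        · exact ⟨⟨le_rfl, hT⟩, h0⟩
        · exact ⟨⟨h1.le, h2⟩, h3⟩
    have h0not : (0:ℝ) ∉ {t ∈ Ioo 0 T | h t = 0} := fun hc => lt_irrefl 0 hc.1.1
    rw [hins, Set.ncard_insert_of_notMem h0not hZofin, hk]
    omega
  · -- h 0 ≠ 0
    have hTne : h T ≠ 0 := by rw [hTval]; exact neg_ne_zero.2 h0
    have hZeq : {t ∈ Ico 0 T | h t = 0} = {t ∈ Ioo 0 T | h t = 0} := by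
      ext t
      constructor
      · rintro ⟨⟨h1, h2⟩, h3⟩
        rcases eq_or_lt_of_le h1 with h1' | h1'
        · exact absurd (h1' ▸ h3) h0
        · exact ⟨⟨h1', h2⟩, h3⟩
      · rintro ⟨⟨h1, h2⟩, h3⟩
        exact ⟨⟨h1.le, h2⟩, h3⟩
    have hpar := sl_parity hh hs ({t ∈ Ioo 0 T | h t = 0}.ncard) 0 T hT h0 hTne rfl
    have hodd : Odd ({t ∈ Ioo 0 T | h t = 0}.ncard) := by
      by_contra heven
      rw [Nat.not_odd_iff_even] at heven
      rw [heven.neg_one_pow] at hpar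
      rw [hTval] at hpar
      nlinarith [sq_nonneg (h 0)]
    obtain ⟨k, hk⟩ := hodd
    exact ⟨k, by rw [hZeq, hk]⟩

/-- Zeros of antiperiodic eigenfunctions of a periodic Sturm–Liouville problem:
if `p, q` are smooth, positive and `t₀/(2n)`-periodic, and `h` is a nonzero solution
of `−(p h′)′ + q h = λ h` which is `t₀/(2n)`-antiperiodic (hence `t₀`-periodic),
then `h` has exactly `2n(2k+1)` zeros on `[0, t₀)` for some integer `k ≥ 0`. -/
theorem antiperiodic_eigenfunction_zero_count
    (t₀ : ℝ) (ht₀ : 0 < t₀) (n : ℕ) (hn : 0 < n)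
    (p q h : ℝ → ℝ) (lam : ℝ)
    (hp : ContDiff ℝ (⊤ : ℕ∞) p) (hq : ContDiff ℝ (⊤ : ℕ∞) q) (hh : ContDiff ℝ (⊤ : ℕ∞) h)
    (hp_pos : ∀ t, 0 < p t) (hq_pos : ∀ t, 0 < q t)
    (hp_per : ∀ t, p (t + t₀ / (2 * n)) = p t)
    (hq_per : ∀ t, q (t + t₀ / (2 * n)) = q t)
    (hode : ∀ t, -(deriv (fun s => p s * deriv h s)) t + q t * h t = lam * h t)
    (hanti : ∀ t, h (t + t₀ / (2 * n)) = -h t)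
    (hne : ∃ t, h t ≠ 0) :
    ∃ k : ℕ, ({t ∈ Ico 0 t₀ | h t = 0}).ncard = 2 * n * (2 * k + 1) := by
  have hn' : (0:ℝ) < (n:ℝ) := Nat.cast_pos.2 hn
  set T : ℝ := t₀ / (2 * (n:ℝ)) with hTdef
  have hT : 0 < T := by rw [hTdef]; positivity
  have hhd : Differentiable ℝ h := hh.differentiable (by simp)
  have hder : ∀ t, HasDerivAt h (deriv h t) t := fun t => (hhd t).hasDerivAt
  have hhc : Continuous h := hh.continuous
  have hh' : ContDiff ℝ (⊤ : ℕ∞) (deriv h) := (contDiff_infty_iff_deriv.mp (hh.of_le (by simp))).2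
  have hwC : Continuous (fun s => p s * deriv h s) := hp.continuous.mul hh'.continuous
  have hwdiff : Differentiable ℝ (fun s => p s * deriv h s) :=
    ((hp.of_le (by simp)).mul hh').differentiable (by simp)
  have hwd : ∀ t, HasDerivAt (fun s => p s * deriv h s) ((q t - lam) * h t) t := by
    intro t
    have h1 := (hwdiff t).hasDerivAt
    have h2 := hode t
    have h3 : deriv (fun s => p s * deriv h s) t = (q t - lam) * h t := by linarith
    rwa [h3] at h1
  -- periodic bounds
  have hpper : Function.Periodic p T := hp_per
  have hqper : Function.Periodic (fun t => |q t - lam|) T := fun t => by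
    simp only [hq_per t]
  obtain ⟨tp, htp, hptp⟩ := isCompact_Icc.exists_isMinOn (nonempty_Icc.2 hT.le)
    hp.continuous.continuousOn
  obtain ⟨tq, htq, hqtq⟩ := isCompact_Icc.exists_isMaxOn (nonempty_Icc.2 hT.le)
    ((hq.continuous.sub continuous_const).abs.continuousOn :
      ContinuousOn (fun t => |q t - lam|) (Icc 0 T))
  have hple : ∀ t, p tp ≤ p t := by
    intro t
    obtain ⟨y, hy, hyeq⟩ := hpper.exists_mem_Ico₀ hT t
    rw [hyeq]
    exact isMinOn_iff.mp hptp y (Ico_subset_Icc_self hy)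
  have hQb : ∀ t, |q t - lam| ≤ |q tq - lam| := by
    intro t
    obtain ⟨y, hy, hyeq⟩ := hqper.exists_mem_Ico₀ hT t
    rw [hyeq]
    exact isMaxOn_iff.mp hqtq y (Ico_subset_Icc_self hy)
  have hsimple := sl_simple_zeros p q h lam (p tp) (|q tq - lam|) (hp_pos tp) hple hQb
    hp_pos hhc hwC hder hwd hne
  have hs : ∀ c, h c = 0 → ∃ d, d ≠ 0 ∧ HasDerivAt h d c :=
    fun c hc => ⟨deriv h c, hsimple c hc, hder c⟩
  have hanti' : ∀ t, deriv h (t + T) = -deriv h t := by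
    intro t
    have h1 : deriv (fun s => h (s + T)) t = deriv h (t + T) := deriv_comp_add_const h T t
    have h3 : (fun s => h (s + T)) = fun s => -h s := funext hanti
    rw [h3, deriv.fun_neg] at h1
    linarith
  obtain ⟨k, hk⟩ := sl_odd_count hT hhc hs hanti hanti'
  refine ⟨k, ?_⟩
  have hz : ∀ x, h (x + T) = 0 ↔ h x = 0 := fun x => by rw [hanti x, neg_eq_zero]
  have hfinab : ∀ a b : ℝ, {t ∈ Icc a b | h t = 0}.Finite := sl_zeros_finite hhc hs
  have hcount := sl_count_blocks hT hz hfinab (2 * n)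
  have hcast : ((2 * n : ℕ) : ℝ) * T = t₀ := by
    rw [hTdef]; push_cast; field_simp
  rw [hcast] at hcount
  rw [hcount, hk]
end
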